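/- Let H be a separable Hilbert space and (B_i) a sequence of bounded operators on H such that the series ∑_i B_i* B_i converges strongly to a bounded operator T. If ρ is a positive trace-class operator on H, then the series ∑_i B_i ρ B_i* converges in trace norm and Tr(∑_i B_i ρ B_i*) = Tr(ρ T). -/

import Mathlib

/-!
Write `ρ = C * C` with `C = √ρ` self-adjoint. Then `Tr (B i ρ (B i)†) = ‖C (B i)†‖²_HS = ‖B i C‖²_HS
= ∑ b, ‖B i (C e b)‖²`; summing over `i` and exchanging the nonnegative sums, the strong convergence
of `∑ i, (B i)† B i` to `T` turns this into `∑ b, ⟪C e b, T (C e b)⟫ = Tr (C T C)`, which is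
`Tr (ρ T)` by cyclicity of the trace for the Hilbert–Schmidt operators `C` and `C T`.
-/

open Filter Topology ContinuousLinearMap
open scoped InnerProductSpace ENNReal

theorem summable_of_tsum_ofReal_ne_top {α : Type*} {f : α → ℝ} (hf : ∀ i, 0 ≤ f i)
    (h : ∑' i, ENNReal.ofReal (f i) ≠ ∞) : Summable f :=
  (ENNReal.summable_toReal h).congr fun i => ENNReal.toReal_ofReal (hf i)

theorem summable_and_hasSum_tsum_of_tsum_tsum_ofReal_eq {α β : Type*} {u : α → β → ℝ}
    (hu : ∀ i j, 0 ≤ u i j) {s : ℝ} (hs : 0 ≤ s)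
    (h : ∑' i, ∑' j, ENNReal.ofReal (u i j) = ENNReal.ofReal s) :
    (∀ i, Summable (u i)) ∧ HasSum (fun i => ∑' j, u i j) s := by
  have hrow : ∀ i, Summable (u i) := fun i =>
    summable_of_tsum_ofReal_ne_top (hu i) <|
      ne_top_of_le_ne_top (h ▸ ENNReal.ofReal_ne_top) (ENNReal.le_tsum i)
  have hrow_eq : ∀ i, ENNReal.ofReal (∑' j, u i j) = ∑' j, ENNReal.ofReal (u i j) := fun i =>
    ENNReal.ofReal_tsum_of_nonneg (hu i) (hrow i)
  have hnonneg : ∀ i, 0 ≤ ∑' j, u i j := fun i => tsum_nonneg (hu i)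
  have hsum : Summable fun i => ∑' j, u i j :=
    summable_of_tsum_ofReal_ne_top hnonneg <| by simpa only [hrow_eq, h] using ENNReal.ofReal_ne_top
  refine ⟨hrow, ?_⟩
  convert hsum.hasSum
  rw [← ENNReal.ofReal_eq_ofReal_iff hs (tsum_nonneg hnonneg),
    ENNReal.ofReal_tsum_of_nonneg hnonneg hsum, ← h]
  exact tsum_congr hrow_eq |>.symm

namespace HilbertBasis

variable {𝕜 E ι : Type*} [RCLike 𝕜] [NormedAddCommGroup E] [InnerProductSpace 𝕜 E]
  (b : HilbertBasis ι 𝕜 E)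

theorem hasSum_norm_inner_sq (x : E) : HasSum (fun i => ‖⟪b i, x⟫_𝕜‖ ^ 2) (‖x‖ ^ 2) := by
  simpa only [ENNReal.toReal_ofNat, Real.rpow_two, b.repr_apply_apply,
    LinearIsometryEquiv.norm_map] using lp.hasSum_norm (p := 2) (by norm_num) (b.repr x)

theorem tsum_ofReal_norm_sq_eq_tsum_tsum (x : E) :
    ENNReal.ofReal (‖x‖ ^ 2) = ∑' i, ENNReal.ofReal (‖⟪b i, x⟫_𝕜‖ ^ 2) := by
  rw [← (b.hasSum_norm_inner_sq x).tsum_eq,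
    ENNReal.ofReal_tsum_of_nonneg (fun _ => by positivity) (b.hasSum_norm_inner_sq x).summable]

theorem summable_norm_inner_sq_prod {A : E →L[𝕜] E} (hA : Summable fun i => ‖A (b i)‖ ^ 2) :
    Summable fun p : ι × ι => ‖⟪b p.2, A (b p.1)⟫_𝕜‖ ^ 2 :=
  (summable_prod_of_nonneg fun _ => by positivity).mpr
    ⟨fun i => (b.hasSum_norm_inner_sq (A (b i))).summable,
      hA.congr fun i => ((b.hasSum_norm_inner_sq (A (b i))).tsum_eq).symm⟩

variable [CompleteSpace E]

theorem tsum_ofReal_norm_sq_adjoint (A : E →L[𝕜] E) :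
    ∑' i, ENNReal.ofReal (‖adjoint A (b i)‖ ^ 2) = ∑' i, ENNReal.ofReal (‖A (b i)‖ ^ 2) := by
  simp only [b.tsum_ofReal_norm_sq_eq_tsum_tsum]
  rw [ENNReal.tsum_comm]
  refine tsum_congr fun i => tsum_congr fun j => ?_
  rw [norm_inner_symm, adjoint_inner_left]

theorem summable_norm_sq_adjoint {A : E →L[𝕜] E} (hA : Summable fun i => ‖A (b i)‖ ^ 2) :
    Summable fun i => ‖adjoint A (b i)‖ ^ 2 :=
  summable_of_tsum_ofReal_ne_top (fun _ => by positivity) <|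
    b.tsum_ofReal_norm_sq_adjoint A ▸ hA.tsum_ofReal_ne_top

theorem summable_norm_sq_comp {A : E →L[𝕜] E} (hA : Summable fun i => ‖A (b i)‖ ^ 2)
    (X : E →L[𝕜] E) : Summable fun i => ‖(A ∘L X) (b i)‖ ^ 2 := by
  have hadj : Summable fun i => ‖adjoint (A ∘L X) (b i)‖ ^ 2 := by
    refine ((b.summable_norm_sq_adjoint hA).mul_left (‖adjoint X‖ ^ 2)).of_nonneg_of_le
      (fun _ => by positivity) fun i => ?_
    rw [adjoint_comp, comp_apply, ← mul_pow]
    exact pow_le_pow_left₀ (norm_nonneg _) (le_opNorm _ _) 2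
  simpa only [adjoint_adjoint] using b.summable_norm_sq_adjoint hadj

theorem hasSum_inner_apply_mul_inner_apply (S R : E →L[𝕜] E) (i : ι) :
    HasSum (fun j => ⟪b i, S (b j)⟫_𝕜 * ⟪b j, R (b i)⟫_𝕜) ⟪b i, S (R (b i))⟫_𝕜 := by
  simpa only [adjoint_inner_left] using b.hasSum_inner_mul_inner (adjoint S (b i)) (R (b i))

/-- Cyclicity of the trace for a product of two Hilbert–Schmidt operators. -/
theorem tsum_inner_apply_apply_comm {S R : E →L[𝕜] E}
    (hS : Summable fun i => ‖S (b i)‖ ^ 2) (hR : Summable fun i => ‖R (b i)‖ ^ 2) :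
    ∑' i, ⟪b i, S (R (b i))⟫_𝕜 = ∑' i, ⟪b i, R (S (b i))⟫_𝕜 := by
  set f : ι × ι → 𝕜 := fun p => ⟪b p.1, S (b p.2)⟫_𝕜 * ⟪b p.2, R (b p.1)⟫_𝕜
  have hS_adj := b.summable_norm_inner_sq_prod (b.summable_norm_sq_adjoint hS)
  have hf : Summable f := by
    refine ((hS_adj.add (b.summable_norm_inner_sq_prod hR)).div_const 2).of_norm_bounded fun p => ?_
    rw [norm_mul, ← adjoint_inner_left, norm_inner_symm]
    nlinarith [sq_nonneg (‖⟪b p.2, adjoint S (b p.1)⟫_𝕜‖ - ‖⟪b p.2, R (b p.1)⟫_𝕜‖)]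
  have hrows := hf.hasSum.prod_fiberwise (b.hasSum_inner_apply_mul_inner_apply S R)
  have hcols := ((Equiv.prodComm ι ι).hasSum_iff.mpr hf.hasSum).prod_fiberwise fun i => by
    simpa [f, mul_comm] using b.hasSum_inner_apply_mul_inner_apply R S i
  exact hrows.tsum_eq.trans hcols.tsum_eq.symm

end HilbertBasis

section StrongSum

variable {𝕜 E : Type*} [RCLike 𝕜] [NormedAddCommGroup E] [InnerProductSpace 𝕜 E]
  [CompleteSpace E] {B : ℕ → E →L[𝕜] E} {T : E →L[𝕜] E}

theorem tendsto_sum_norm_sq_of_tendsto_sum_adjoint_apply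
    (hT : ∀ x, Tendsto (fun n => ∑ i ∈ Finset.range n, adjoint (B i) (B i x)) atTop (𝓝 (T x)))
    (x : E) :
    Tendsto (fun n => ((∑ i ∈ Finset.range n, ‖B i x‖ ^ 2 : ℝ) : 𝕜)) atTop (𝓝 ⟪x, T x⟫_𝕜) := by
  convert (tendsto_const_nhds (x := x)).inner (hT x) using 2 with n
  simp only [inner_sum, adjoint_inner_right, inner_self_eq_norm_sq_to_K, RCLike.ofReal_sum,
    RCLike.ofReal_pow]

theorem hasSum_norm_sq_of_tendsto_sum_adjoint_apply
    (hT : ∀ x, Tendsto (fun n => ∑ i ∈ Finset.range n, adjoint (B i) (B i x)) atTop (𝓝 (T x)))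
    (x : E) : HasSum (fun i => ‖B i x‖ ^ 2) (RCLike.re ⟪x, T x⟫_𝕜) := by
  rw [hasSum_iff_tendsto_nat_of_nonneg fun _ => by positivity]
  simpa [Function.comp_def] using (RCLike.continuous_re.tendsto _).comp
    (tendsto_sum_norm_sq_of_tendsto_sum_adjoint_apply hT x)

theorem ofReal_re_inner_of_tendsto_sum_adjoint_apply
    (hT : ∀ x, Tendsto (fun n => ∑ i ∈ Finset.range n, adjoint (B i) (B i x)) atTop (𝓝 (T x)))
    (x : E) : (RCLike.re ⟪x, T x⟫_𝕜 : 𝕜) = ⟪x, T x⟫_𝕜 :=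
  tendsto_nhds_unique ((RCLike.continuous_ofReal.tendsto _).comp
    (hasSum_norm_sq_of_tendsto_sum_adjoint_apply hT x).tendsto_sum_nat)
    (tendsto_sum_norm_sq_of_tendsto_sum_adjoint_apply hT x)

theorem HilbertBasis.tsum_tsum_ofReal_norm_sq_eq {ι : Type*} (b : HilbertBasis ι 𝕜 E)
    (hT : ∀ x, Tendsto (fun n => ∑ i ∈ Finset.range n, adjoint (B i) (B i x)) atTop (𝓝 (T x)))
    (C : E →L[𝕜] E) :
    ∑' i, ∑' a, ENNReal.ofReal (‖C (adjoint (B i) (b a))‖ ^ 2) =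
      ∑' a, ENNReal.ofReal (RCLike.re ⟪adjoint C (b a), T (adjoint C (b a))⟫_𝕜) := by
  calc ∑' i, ∑' a, ENNReal.ofReal (‖C (adjoint (B i) (b a))‖ ^ 2)
      = ∑' i, ∑' a, ENNReal.ofReal (‖B i (adjoint C (b a))‖ ^ 2) := by
        refine tsum_congr fun i => ?_
        simpa only [adjoint_comp, adjoint_adjoint, comp_apply] using
          (b.tsum_ofReal_norm_sq_adjoint (C ∘L adjoint (B i))).symm
    -- in `ℝ≥0∞` the order of summation can be exchanged without any summability hypothesis
    _ = ∑' a, ∑' i, ENNReal.ofReal (‖B i (adjoint C (b a))‖ ^ 2) := ENNReal.tsum_comm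
    _ = _ := by
        refine tsum_congr fun a => ?_
        have h := hasSum_norm_sq_of_tendsto_sum_adjoint_apply hT (adjoint C (b a))
        rw [← h.tsum_eq, ENNReal.ofReal_tsum_of_nonneg (fun _ => by positivity) h.summable]

end StrongSum

theorem IsSelfAdjoint.inner_mul_self_apply {𝕜 E : Type*} [RCLike 𝕜] [NormedAddCommGroup E]
    [InnerProductSpace 𝕜 E] [CompleteSpace E] {C : E →L[𝕜] E} (hC : IsSelfAdjoint C) (x : E) :
    ⟪x, (C * C) x⟫_𝕜 = ((‖C x‖ ^ 2 : ℝ) : 𝕜) := by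
  rw [mul_apply_eq_comp, ← adjoint_inner_left, hC.adjoint_eq, inner_self_eq_norm_sq_to_K,
    RCLike.ofReal_pow]

theorem stmt0_general
    {H : Type*} [NormedAddCommGroup H] [InnerProductSpace ℂ H]
    [CompleteSpace H]
    {ι : Type*} (e : HilbertBasis ι ℂ H)
    (B : ℕ → H →L[ℂ] H) (T : H →L[ℂ] H)
    (hT : ∀ x : H, Filter.Tendsto
      (fun n => ∑ i ∈ Finset.range n, (ContinuousLinearMap.adjoint (B i)) ((B i) x))
      Filter.atTop (nhds (T x)))
    (ρ : H →L[ℂ] H) (hρ : ρ.IsPositive)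
    (hρtc : Summable (fun a => (inner ℂ (e a) (ρ (e a)) : ℂ))) :
    (∀ i, Summable (fun a =>
      (inner ℂ (e a) ((B i) (ρ ((ContinuousLinearMap.adjoint (B i)) (e a)))) : ℂ))) ∧
    Summable (fun i => ∑' a,
      (inner ℂ (e a) ((B i) (ρ ((ContinuousLinearMap.adjoint (B i)) (e a)))) : ℂ)) ∧
    ∑' i, ∑' a, (inner ℂ (e a) ((B i) (ρ ((ContinuousLinearMap.adjoint (B i)) (e a)))) : ℂ)
      = ∑' a, (inner ℂ (e a) (ρ (T (e a))) : ℂ) := by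
  obtain ⟨C, hC, rfl⟩ : ∃ C : H →L[ℂ] H, IsSelfAdjoint C ∧ C * C = ρ :=
    ⟨CFC.sqrt ρ, (CFC.sqrt_nonneg ρ).isSelfAdjoint,
      CFC.sqrt_mul_sqrt_self ρ ((nonneg_iff_isPositive ρ).mpr hρ)⟩
  have hdiag (i : ℕ) (a : ι) := (adjoint_inner_left (B i) _ (e a)).symm.trans
    (hC.inner_mul_self_apply (adjoint (B i) (e a)))
  have hC_hs : Summable fun a => ‖C (e a)‖ ^ 2 := by
    simpa only [hC.inner_mul_self_apply, RCLike.summable_ofReal] using hρtc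
  set W : ι → ℝ := fun a => RCLike.re ⟪C (e a), T (C (e a))⟫_ℂ
  have hW_nonneg : ∀ a, 0 ≤ W a := fun a =>
    (hasSum_norm_sq_of_tendsto_sum_adjoint_apply hT (C (e a))).nonneg fun _ => sq_nonneg _
  have hW : Summable W := (hC_hs.mul_left ‖T‖).of_nonneg_of_le hW_nonneg fun a =>
    calc W a ≤ ‖C (e a)‖ * ‖T (C (e a))‖ := re_inner_le_norm _ _
      _ ≤ ‖C (e a)‖ * (‖T‖ * ‖C (e a)‖) := by gcongr; exact T.le_opNorm _
      _ = ‖T‖ * ‖C (e a)‖ ^ 2 := by ring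
  obtain ⟨hrows, hsum⟩ := summable_and_hasSum_tsum_of_tsum_tsum_ofReal_eq
    (fun _ _ => sq_nonneg _) (tsum_nonneg hW_nonneg) <| by
      rw [e.tsum_tsum_ofReal_norm_sq_eq hT, hC.adjoint_eq,
        ENNReal.ofReal_tsum_of_nonneg hW_nonneg hW]
  simp only [hdiag, ← RCLike.ofReal_tsum, RCLike.summable_ofReal]
  refine ⟨hrows, hsum.summable, ?_⟩
  calc _ = ∑' a, ⟪e a, (C ∘L T) (C (e a))⟫_ℂ := by
        rw [hsum.tsum_eq, RCLike.ofReal_tsum]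
        refine tsum_congr fun a => ?_
        simp only [W]
        rw [ofReal_re_inner_of_tendsto_sum_adjoint_apply hT, comp_apply, ← adjoint_inner_left C,
          hC.adjoint_eq]
    _ = ∑' a, ⟪e a, (C * C) (T (e a))⟫_ℂ :=
        e.tsum_inner_apply_apply_comm (e.summable_norm_sq_comp hC_hs T) hC_hs

/-- If `(B i)` is a sequence of bounded operators on a separable Hilbert space `H`
such that `∑ i, (B i)† (B i)` converges strongly to a bounded operator `T`, and `ρ` is a
positive trace-class operator on `H` (trace-class expressed via summability of the diagonal
inner products along a Hilbert basis `e`), then the series `∑ i, B i ρ (B i)†` converges in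
trace norm (for positive summands this is equivalent to summability of their traces) and
`Tr (∑ i, B i ρ (B i)†) = Tr (ρ T)`. -/
theorem stmt0
    {H : Type*} [NormedAddCommGroup H] [InnerProductSpace ℂ H]
    [CompleteSpace H] [TopologicalSpace.SeparableSpace H]
    {ι : Type*} (e : HilbertBasis ι ℂ H)
    (B : ℕ → H →L[ℂ] H) (T : H →L[ℂ] H)
    (hT : ∀ x : H, Filter.Tendsto
      (fun n => ∑ i ∈ Finset.range n, (ContinuousLinearMap.adjoint (B i)) ((B i) x))
      Filter.atTop (nhds (T x)))
    (ρ : H →L[ℂ] H) (hρ : ρ.IsPositive)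
    (hρtc : Summable (fun a => (inner ℂ (e a) (ρ (e a)) : ℂ))) :
    (∀ i, Summable (fun a =>
      (inner ℂ (e a) ((B i) (ρ ((ContinuousLinearMap.adjoint (B i)) (e a)))) : ℂ))) ∧
    Summable (fun i => ∑' a,
      (inner ℂ (e a) ((B i) (ρ ((ContinuousLinearMap.adjoint (B i)) (e a)))) : ℂ)) ∧
    ∑' i, ∑' a, (inner ℂ (e a) ((B i) (ρ ((ContinuousLinearMap.adjoint (B i)) (e a)))) : ℂ)
      = ∑' a, (inner ℂ (e a) (ρ (T (e a))) : ℂ) :=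
  stmt0_general e B T hT ρ hρ hρtc
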